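/- Logical characterization of strong reverse bisimilarity without conjunction: P1 ~RB P2 if and only if P1 and P2 satisfy the same formulas of the logic L_RB with syntax φ ::= true | ⟨a†⟩φ, where P ⊨ ⟨a†⟩φ iff there exists P' with P' →a P and P' ⊨ φ. -/
import Mathlib


inductive Proc (A : Type) : Type
  | nil : Proc A
  | pre : A → Proc A → Proc A
  | exe : A → Proc A → Proc A
  | choice : Proc A → Proc A → Proc A

inductive Initial {A : Type} : Proc A → Prop
  | nil : Initial .nil
  | pre {a : A} {P : Proc A} : Initial P → Initial (.pre a P)
  | choice {P Q : Proc A} : Initial P → Initial Q → Initial (.choice P Q)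

inductive Final {A : Type} : Proc A → Prop
  | nil : Final .nil
  | exe {a : A} {P : Proc A} : Final P → Final (.exe a P)
  | choiceL {P Q : Proc A} : Final P → Initial Q → Final (.choice P Q)
  | choiceR {P Q : Proc A} : Initial P → Final Q → Final (.choice P Q)

inductive Reachable {A : Type} : Proc A → Prop
  | nil : Reachable .nil
  | pre {a : A} {P : Proc A} : Initial P → Reachable (.pre a P)
  | exe {a : A} {P : Proc A} : Reachable P → Reachable (.exe a P)
  | choiceL {P Q : Proc A} : Reachable P → Initial Q → Reachable (.choice P Q)
  | choiceR {P Q : Proc A} : Initial P → Reachable Q → Reachable (.choice P Q)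

inductive Tr {A : Type} : Proc A → A → Proc A → Prop
  | actf {a : A} {P : Proc A} : Initial P → Tr (.pre a P) a (.exe a P)
  | actp {a b : A} {P P' : Proc A} : Tr P b P' → Tr (.exe a P) b (.exe a P')
  | chol {a : A} {P1 P1' P2 : Proc A} : Tr P1 a P1' → Initial P2 →
      Tr (.choice P1 P2) a (.choice P1' P2)
  | chor {a : A} {P1 P2 P2' : Proc A} : Tr P2 a P2' → Initial P1 →
      Tr (.choice P1 P2) a (.choice P1 P2')

def IsFwdBisim {A : Type} (B : Proc A → Proc A → Prop) : Prop :=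
  (∀ P Q, B P Q → B Q P) ∧
  (∀ P Q a P', B P Q → Tr P a P' → ∃ Q', Tr Q a Q' ∧ B P' Q')

def IsRevBisim {A : Type} (B : Proc A → Proc A → Prop) : Prop :=
  (∀ P Q, B P Q → B Q P) ∧
  (∀ P Q a P', B P Q → Tr P' a P → ∃ Q', Tr Q' a Q ∧ B P' Q')

def IsFRBisim {A : Type} (B : Proc A → Proc A → Prop) : Prop :=
  (∀ P Q, B P Q → B Q P) ∧
  (∀ P Q a P', B P Q → Tr P a P' → ∃ Q', Tr Q a Q' ∧ B P' Q') ∧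
  (∀ P Q a P', B P Q → Tr P' a P → ∃ Q', Tr Q' a Q ∧ B P' Q')

def FB {A : Type} (P Q : Proc A) : Prop := ∃ B, IsFwdBisim B ∧ B P Q

def RB {A : Type} (P Q : Proc A) : Prop := ∃ B, IsRevBisim B ∧ B P Q

def FRB {A : Type} (P Q : Proc A) : Prop := ∃ B, IsFRBisim B ∧ B P Q

def FBps {A : Type} (P Q : Proc A) : Prop :=
  ∃ B, IsFwdBisim B ∧ (∀ P' Q', B P' Q' → (Initial P' ↔ Initial Q')) ∧ B P Q

inductive FormRB (A : Type) : Type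
  | tt : FormRB A
  | diamB : A → FormRB A → FormRB A

def SatRB {A : Type} : Proc A → FormRB A → Prop
  | _, FormRB.tt => True
  | P, FormRB.diamB a φ => ∃ P', Tr P' a P ∧ SatRB P' φ

lemma tr_not_initial {A : Type} {P : Proc A} {a : A} {Q : Proc A}
    (h : Tr P a Q) : ¬ Initial Q := by
  induction h with
  | actf _ => intro h; cases h
  | actp _ ih => intro h; cases h
  | chol _ _ ih => intro h; cases h with | choice h1 _ => exact ih h1
  | chor _ _ ih => intro h; cases h with | choice _ h2 => exact ih h2

lemma tr_unique {A : Type} {P P' : Proc A} {a b : A} {Q : Proc A}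
    (h1 : Tr P a Q) (h2 : Tr P' b Q) : P = P' ∧ a = b := by
  induction h1 generalizing P' b with
  | actf hi =>
    cases h2 with
    | actf _ => exact ⟨rfl, rfl⟩
    | actp ht => exact absurd hi (tr_not_initial ht)
  | actp ht ih =>
    cases h2 with
    | actf hi => exact absurd hi (tr_not_initial ht)
    | actp ht' => obtain ⟨h, h'⟩ := ih ht'; cases h; exact ⟨rfl, h'⟩
  | chol ht hi ih =>
    cases h2 with
    | chol ht' _ => obtain ⟨h, h'⟩ := ih ht'; cases h; exact ⟨rfl, h'⟩
    | chor ht' hi' => exact absurd hi' (tr_not_initial ht)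
  | chor ht hi ih =>
    cases h2 with
    | chol ht' hi' => exact absurd hi' (tr_not_initial ht)
    | chor ht' _ => obtain ⟨h, h'⟩ := ih ht'; cases h; exact ⟨rfl, h'⟩

lemma rb_sat {A : Type} (φ : FormRB A) : ∀ P Q : Proc A, RB P Q →
    (SatRB P φ ↔ SatRB Q φ) := by
  induction φ with
  | tt => intro P Q _; simp [SatRB]
  | diamB a φ ih =>
    intro P Q ⟨B, ⟨hsym, hrev⟩, hPQ⟩
    constructor
    · rintro ⟨P', hP', hφ⟩
      obtain ⟨Q', hQ', hB⟩ := hrev P Q a P' hPQ hP'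
      exact ⟨Q', hQ', (ih P' Q' ⟨B, ⟨hsym, hrev⟩, hB⟩).mp hφ⟩
    · rintro ⟨Q', hQ', hφ⟩
      obtain ⟨P', hP', hB⟩ := hrev Q P a Q' (hsym _ _ hPQ) hQ'
      exact ⟨P', hP', (ih Q' P' ⟨B, ⟨hsym, hrev⟩, hB⟩).mp hφ⟩

theorem rb_logical_characterization {A : Type} (P1 P2 : Proc A) :
    RB P1 P2 ↔ ∀ φ : FormRB A, SatRB P1 φ ↔ SatRB P2 φ := by
  constructor
  · intro h φ; exact rb_sat φ P1 P2 h
  · intro h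
    refine ⟨fun P Q => ∀ φ, SatRB P φ ↔ SatRB Q φ, ⟨?_, ?_⟩, h⟩
    · intro P Q h φ; exact (h φ).symm
    · intro P Q a P' hPQ hP'
      obtain ⟨Q', hQ', -⟩ :=
        (hPQ (FormRB.diamB a FormRB.tt)).mp ⟨P', hP', trivial⟩
      refine ⟨Q', hQ', fun φ => ⟨?_, ?_⟩⟩
      · intro hφ
        obtain ⟨Q'', hQ'', hφ'⟩ := (hPQ (FormRB.diamB a φ)).mp ⟨P', hP', hφ⟩
        obtain ⟨rfl, -⟩ := tr_unique hQ'' hQ'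
        exact hφ'
      · intro hφ
        obtain ⟨P'', hP'', hφ'⟩ := (hPQ (FormRB.diamB a φ)).mpr ⟨Q', hQ', hφ⟩
        obtain ⟨rfl, -⟩ := tr_unique hP'' hP'
        exact hφ'
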